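/- arXiv:2212.07247 — 4 statements merged into one kernel-verified Lean document; each statement's English description precedes it below -/
import Mathlib

section
/- Let k be a field of characteristic zero, L = sl2(k) with standard basis (e, h, f), and V a finite-dimensional representation of L. For each integer μ let V(μ) denote the h-weight space {v ∈ V | h·v = μv}. Then the action of e restricts to a linear isomorphism from V(-1) onto V(1). -/
/-!
A nonzero vector of weight `-1` killed by `e` would be primitive, but primitive vectors of a
finite-dimensional representation have natural-number weights; so `e` is injective on `V(-1)`.
Applying the same argument to the triple `(-h, f, e)` shows that `f` is injective on `V(1)`.
Since `e` and `f` map `V(-1)` and `V(1)` into each other, the two spaces have the same dimension,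
and `e` is a bijection between them.
-/

open LieModule Module Set

namespace LinearMap

variable {K V W : Type*} [DivisionRing K] [AddCommGroup V] [Module K V] [AddCommGroup W]
  [Module K W] {P : Submodule K V} {Q : Submodule K W} {A : V →ₗ[K] W}

theorem finrank_le_finrank_of_mapsTo_of_injOn [FiniteDimensional K Q]
    (hA : MapsTo A P Q) (hAi : InjOn A P) : finrank K P ≤ finrank K Q :=
  finrank_le_finrank_of_injective (f := A.restrict hA) (hA.restrict_inj.mpr hAi)

theorem bijOn_of_injOn_of_finrank_le [FiniteDimensional K P] [FiniteDimensional K Q]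
    (hA : MapsTo A P Q) (hAi : InjOn A P) (hd : finrank K Q ≤ finrank K P) :
    BijOn A P Q := by
  have hinj : Function.Injective (A.restrict hA) := hA.restrict_inj.mpr hAi
  have hdim : finrank K P = finrank K Q :=
    le_antisymm (finrank_le_finrank_of_mapsTo_of_injOn hA hAi) hd
  refine ⟨hA, hAi, hA.restrict_surjective_iff.mp ?_⟩
  exact (injective_iff_surjective_of_finrank_eq_finrank hdim).mp hinj

end LinearMap

namespace IsSl2Triple

variable {R L M : Type*} [CommRing R] [LieRing L] [LieAlgebra R L]
  [AddCommGroup M] [Module R M] [LieRingModule L M] [LieModule R L M] {h e f : L}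

lemma mapsTo_eigenspace_toEnd_e (t : IsSl2Triple h e f) (μ : R) :
    MapsTo (toEnd R L M e) (End.eigenspace (toEnd R L M h) μ : Set M)
      (End.eigenspace (toEnd R L M h) (μ + 2) : Set M) := by
  intro m hm
  rw [SetLike.mem_coe, End.mem_eigenspace_iff] at hm ⊢
  change ⁅h, m⁆ = μ • m at hm
  change ⁅h, ⁅e, m⁆⁆ = (μ + 2) • ⁅e, m⁆
  rw [leibniz_lie, t.lie_h_e_smul R, hm, smul_lie, lie_smul, add_smul, add_comm]

lemma mapsTo_eigenspace_toEnd_f (t : IsSl2Triple h e f) (μ : R) :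
    MapsTo (toEnd R L M f) (End.eigenspace (toEnd R L M h) μ : Set M)
      (End.eigenspace (toEnd R L M h) (μ - 2) : Set M) := by
  intro m hm
  rw [SetLike.mem_coe, End.mem_eigenspace_iff] at hm ⊢
  change ⁅h, m⁆ = μ • m at hm
  change ⁅h, ⁅f, m⁆⁆ = (μ - 2) • ⁅f, m⁆
  rw [leibniz_lie, t.lie_lie_smul_f R, hm, neg_lie, smul_lie, lie_smul, sub_smul]
  abel

variable [IsDomain R] [CharZero R] [IsNoetherian R M] [IsTorsionFree R M]

lemma injOn_eigenspace_toEnd_e (t : IsSl2Triple h e f) {μ : R} (hμ : ∀ n : ℕ, μ ≠ n) :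
    InjOn (toEnd R L M e) (End.eigenspace (toEnd R L M h) μ : Set M) := by
  refine LinearMap.disjoint_ker_iff_injOn.mp (Submodule.disjoint_def.mpr fun m hm hme ↦ ?_)
  by_contra hm0
  have hP : t.HasPrimitiveVectorWith m μ := ⟨hm0, End.mem_eigenspace_iff.mp hm, hme⟩
  obtain ⟨n, hn⟩ := hP.exists_nat
  exact hμ n hn

lemma injOn_eigenspace_toEnd_f (t : IsSl2Triple h e f) {μ : R} (hμ : ∀ n : ℕ, μ ≠ -n) :
    InjOn (toEnd R L M f) (End.eigenspace (toEnd R L M h) μ : Set M) := by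
  refine LinearMap.disjoint_ker_iff_injOn.mp (Submodule.disjoint_def.mpr fun m hm hmf ↦ ?_)
  by_contra hm0
  have hP : t.symm.HasPrimitiveVectorWith m (-μ) := by
    refine ⟨hm0, ?_, hmf⟩
    rw [neg_lie, neg_smul]
    exact congrArg Neg.neg (End.mem_eigenspace_iff.mp hm)
  obtain ⟨n, hn⟩ := hP.exists_nat
  exact hμ n (neg_eq_iff_eq_neg.mp hn)

end IsSl2Triple

/-- For a finite-dimensional representation `V` of `sl₂` over a field of characteristic
zero, the action of `e` restricts to a linear isomorphism (a bijection, linear since it is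
the restriction of a linear map) from the `h`-weight space `V(-1)` onto `V(1)`. -/
theorem sl2_e_bijOn_weight_neg_one_one
    {k L V : Type*} [Field k] [CharZero k]
    [LieRing L] [LieAlgebra k L]
    [AddCommGroup V] [Module k V] [LieRingModule L V] [LieModule k L V]
    [FiniteDimensional k V]
    {h e f : L} (ht : IsSl2Triple h e f) :
    Set.BijOn (LieModule.toEnd k L V e)
      (Module.End.eigenspace (LieModule.toEnd k L V h) (-1) : Set V)
      (Module.End.eigenspace (LieModule.toEnd k L V h) 1 : Set V) := by
  have hne (n : ℕ) : (-1 : k) ≠ n := by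
    intro hn
    exact Nat.cast_add_one_ne_zero (R := k) n (by rw [← hn, neg_add_cancel])
  have he := ht.mapsTo_eigenspace_toEnd_e (M := V) (-1 : k)
  have hf := ht.mapsTo_eigenspace_toEnd_f (M := V) (1 : k)
  rw [show (-1 : k) + 2 = 1 by norm_num] at he
  rw [show (1 : k) - 2 = -1 by norm_num] at hf
  refine LinearMap.bijOn_of_injOn_of_finrank_le he (ht.injOn_eigenspace_toEnd_e hne) ?_
  refine LinearMap.finrank_le_finrank_of_mapsTo_of_injOn hf (ht.injOn_eigenspace_toEnd_f ?_)
  exact fun n hn ↦ hne n (by rw [hn, neg_neg])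
end

section
/- Let k be a field of characteristic zero and V a finite-dimensional representation of sl2(k) with standard basis (e, h, f). Then the kernel of the action of e on V is contained in the sum of the h-weight spaces V(μ) with μ ≥ 0. -/
/-!
Since `⁅h, f⁆ = -2f`, the powers `fⁿ` are eigenvectors of `ad h` on `End V` with the distinct
eigenvalues `-2n`, so `f` acts nilpotently, say `f ^ N = 0`. For `v ∈ ker e`, commuting `e`
past powers of `f` gives `eᴺ fᴺ v = N! • h (h - 1) ⋯ (h - N + 1) v`, so `v` is killed by a
product of the `h - i` for distinct `i < N` and hence lies in the sum of the eigenspaces `V(i)`.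
-/
open Polynomial Module

section Ring

variable {k A : Type*} [CommRing k] [Ring A] [Algebra k A] {a b c : A}

theorem mul_pow_eq_of_mul_eq_mul_add_smul {r : k} (hab : a * b = b * a + r • b) (n : ℕ) :
    a * b ^ n = b ^ n * a + (n * r) • b ^ n := by
  induction n with
  | zero => simp
  | succ n ih =>
    rw [pow_succ, ← mul_assoc, ih, add_mul, mul_assoc, hab, smul_mul_assoc]
    simp only [mul_add, mul_smul_comm, ← mul_assoc, ← pow_succ]
    push_cast
    module

theorem mul_pow_succ_eq_of_sl2_relations (hab : a * b = b * a + c)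
    (hcb : c * b = b * c + (-2 : k) • b) (n : ℕ) :
    a * b ^ (n + 1) = b ^ (n + 1) * a + (n + 1 : k) • (b ^ n * (c - (n : k) • 1)) := by
  induction n with
  | zero => simp [hab]
  | succ n ih =>
    rw [pow_succ _ (n + 1), ← mul_assoc, ih, add_mul, mul_assoc, hab, smul_mul_assoc, mul_assoc,
      sub_mul, hcb, smul_mul_assoc, one_mul]
    simp only [mul_add, mul_sub, mul_smul_comm, mul_one, ← mul_assoc, ← pow_succ]
    push_cast
    module

end Ring

theorem LieModule.toEnd_mul_eq_of_lie {k L V : Type*} [CommRing k] [LieRing L] [LieAlgebra k L]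
    [AddCommGroup V] [Module k V] [LieRingModule L V] [LieModule k L V] {x y z : L}
    (h : ⁅x, y⁆ = z) :
    toEnd k L V x * toEnd k L V y = toEnd k L V y * toEnd k L V x + toEnd k L V z := by
  ext m
  simp only [Module.End.mul_apply, LinearMap.add_apply, toEnd_apply_apply, ← h, lie_lie,
    add_sub_cancel]

theorem isNilpotent_of_mul_eq_mul_add_smul {k A : Type*} [Field k] [CharZero k] [Ring A]
    [Algebra k A] [FiniteDimensional k A] {a b : A} {r : k} (hr : r ≠ 0)
    (hab : a * b = b * a + r • b) :
    IsNilpotent b := by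
  by_contra hb
  let T : End k A := LinearMap.mulLeft k a - LinearMap.mulRight k a
  have hT (n : ℕ) : T.HasEigenvalue (n * r) := by
    refine Module.End.hasEigenvalue_of_hasEigenvector (x := b ^ n) ⟨?_, fun h ↦ hb ⟨n, h⟩⟩
    rw [Module.End.mem_eigenspace_iff]
    simp [T, mul_pow_eq_of_mul_eq_mul_add_smul hab n]
  have hinj : Function.Injective fun n : ℕ ↦ (n * r : k) := fun m n h ↦ by
    simpa [hr] using h
  exact Set.infinite_range_of_injective hinj <|
    T.finite_hasEigenvalue.subset (Set.range_subset_iff.2 hT)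

theorem ker_aeval_prod_X_sub_C_le_iSup_eigenspace {k V ι : Type*} [Field k] [AddCommGroup V]
    [Module k V] (f : End k V) (s : Finset ι) {μ : ι → k} (hμ : Set.InjOn μ s) :
    LinearMap.ker (aeval f (∏ i ∈ s, (X - C (μ i)))) ≤ ⨆ i ∈ s, f.eigenspace (μ i) := by
  classical
  induction s using Finset.induction_on with
  | empty => simp [Module.End.one_eq_id]
  | insert j s hj ih =>
    have hcop : IsCoprime (X - C (μ j)) (∏ i ∈ s, (X - C (μ i))) :=
      IsCoprime.prod_right fun i hi ↦ isCoprime_X_sub_C_of_isUnit_sub <| IsUnit.mk0 _ <|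
        sub_ne_zero.2 fun h ↦ hj (hμ (Finset.mem_insert_self j s)
          (Finset.mem_insert_of_mem hi) h ▸ hi)
    rw [Finset.prod_insert hj, ← sup_ker_aeval_eq_ker_aeval_mul_of_coprime f hcop,
      Finset.iSup_insert]
    refine sup_le_sup (le_of_eq ?_) (ih (hμ.mono (Finset.subset_insert j s)))
    simp [Module.End.eigenspace_def, Algebra.algebraMap_eq_smul_one]

theorem pow_apply_pow_apply_eq_factorial_smul_aeval {k V : Type*} [CommRing k] [AddCommGroup V]
    [Module k V] {E F H : End k V} (hHE : H * E = E * H + (2 : k) • E) (hEF : E * F = F * E + H)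
    (hHF : H * F = F * H + (-2 : k) • F) {v : V} (hv : E v = 0) (n : ℕ) :
    (E ^ n) ((F ^ n) v) =
      (n.factorial : k) • aeval H (∏ i ∈ Finset.range n, (X - C (i : k))) v := by
  induction n generalizing v with
  | zero => simp
  | succ n ih =>
    have hEF_v : E ((F ^ (n + 1)) v) = (n + 1 : k) • (F ^ n) ((H - (n : k) • 1) v) := by
      simpa [hv] using congr($(mul_pow_succ_eq_of_sl2_relations hEF hHF n) v)
    have hHv : E ((H - (n : k) • 1) v) = 0 := by
      simpa [hv] using congr($hHE v).symm
    have hlin : aeval H (X - C (n : k)) = H - (n : k) • 1 := by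
      rw [map_sub, aeval_X, aeval_C, Algebra.algebraMap_eq_smul_one]
    rw [pow_succ, Module.End.mul_apply, hEF_v, map_smul, ih hHv, Finset.prod_range_succ, map_mul,
      Module.End.mul_apply, hlin, smul_smul, Nat.factorial_succ, Nat.cast_mul, Nat.cast_succ]

/-- For a finite-dimensional representation `V` of `sl₂` over a field of characteristic
zero, the kernel of the action of `e` is contained in the sum of the `h`-weight spaces
`V(μ)` with `μ ≥ 0` (weights being integers, cast into `k`). -/
theorem sl2_ker_e_le_nonneg_weights
    {k L V : Type*} [Field k] [CharZero k]
    [LieRing L] [LieAlgebra k L]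
    [AddCommGroup V] [Module k V] [LieRingModule L V] [LieModule k L V]
    [FiniteDimensional k V]
    {h e f : L} (ht : IsSl2Triple h e f) :
    LinearMap.ker (LieModule.toEnd k L V e) ≤
      ⨆ μ : ℤ, ⨆ _ : 0 ≤ μ,
        Module.End.eigenspace (LieModule.toEnd k L V h) (μ : k) := by
  set E := LieModule.toEnd k L V e
  set F := LieModule.toEnd k L V f
  set H := LieModule.toEnd k L V h
  have hHE : H * E = E * H + (2 : k) • E := by
    rw [LieModule.toEnd_mul_eq_of_lie (ht.lie_h_e_smul k), map_smul]
  have hEF : E * F = F * E + H := LieModule.toEnd_mul_eq_of_lie ht.lie_e_f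
  have hHF : H * F = F * H + (-2 : k) • F := by
    rw [LieModule.toEnd_mul_eq_of_lie (ht.lie_lie_smul_f k), map_neg, map_smul, neg_smul]
  obtain ⟨N, hN⟩ := isNilpotent_of_mul_eq_mul_add_smul (by norm_num) hHF
  intro v hv
  have hvN : aeval H (∏ i ∈ Finset.range N, (X - C (i : k))) v = 0 := by
    have := pow_apply_pow_apply_eq_factorial_smul_aeval hHE hEF hHF hv N
    rwa [hN, LinearMap.zero_apply, map_zero, eq_comm, smul_eq_zero_iff_right] at this
    exact_mod_cast N.factorial_ne_zero
  refine (ker_aeval_prod_X_sub_C_le_iSup_eigenspace H (Finset.range N)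
    Nat.cast_injective.injOn).trans (iSup₂_le fun i _ ↦ ?_) hvN
  exact le_iSup₂_of_le (i : ℤ) (Int.natCast_nonneg i) (by rw [Int.cast_natCast])
end

section
/- Let E be a real inner product space, S a finite set of vectors of E, and P = {μ ∈ E | ⟨β, μ⟩ ≥ 1 for all β ∈ S}. Suppose λ ∈ P has minimal norm among elements of P, i.e. ‖λ‖ ≤ ‖μ‖ for all μ ∈ P. Then for every η ∈ E with ⟨β, η⟩ ≥ 0 for all β ∈ S, one has ⟨λ, η⟩ ≥ 0. -/
/-! `P` is convex and `λ` is the projection of `0` onto it, so `⟨λ, μ - λ⟩ ≥ 0` for every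
`μ ∈ P`. Since `P` is stable under adding `η`, take `μ = λ + η`. -/

open RealInnerProductSpace

section MinimalNorm

variable {E : Type*} [NormedAddCommGroup E] [InnerProductSpace ℝ E]

theorem convex_setOf_forall_le_inner (S : Set E) (c : ℝ) :
    Convex ℝ {μ : E | ∀ β ∈ S, c ≤ ⟪β, μ⟫} := by
  simp only [Set.ofPred_forall]
  exact convex_iInter₂ fun β _ => convex_halfSpace_ge (innerₛₗ ℝ β).isLinear c

theorem real_inner_sub_nonneg_of_forall_norm_le {K : Set E} (hK : Convex ℝ K) {v : E}
    (hv : v ∈ K) (hmin : ∀ w ∈ K, ‖v‖ ≤ ‖w‖) {w : E} (hw : w ∈ K) :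
    0 ≤ ⟪v, w - v⟫ := by
  have : Nonempty K := ⟨⟨v, hv⟩⟩
  have hinf : ‖0 - v‖ = ⨅ w : K, ‖0 - (w : E)‖ := by
    simp only [zero_sub, norm_neg]
    exact le_antisymm (le_ciInf fun w => hmin w w.2)
      (ciInf_le (f := fun w : K => ‖(w : E)‖)
        ⟨0, Set.forall_mem_range.2 fun _ => norm_nonneg _⟩ ⟨v, hv⟩)
  have := (norm_eq_iInf_iff_real_inner_le_zero hK hv).1 hinf w hw
  rwa [zero_sub, inner_neg_left, neg_nonpos] at this

end MinimalNorm

/-- If `λ` is a minimal-norm point of `P = {μ | ⟨β, μ⟩ ≥ 1 for all β ∈ S}` for a finite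
set `S`, then `⟨λ, η⟩ ≥ 0` for every `η` with `⟨β, η⟩ ≥ 0` for all `β ∈ S`. -/
theorem inner_nonneg_of_min_norm
    {E : Type*} [NormedAddCommGroup E] [InnerProductSpace ℝ E]
    (S : Finset E) {lam : E}
    (hlam : ∀ β ∈ S, 1 ≤ ⟪β, lam⟫)
    (hmin : ∀ μ : E, (∀ β ∈ S, 1 ≤ ⟪β, μ⟫) → ‖lam‖ ≤ ‖μ‖)
    {η : E} (hη : ∀ β ∈ S, 0 ≤ ⟪β, η⟫) :
    0 ≤ ⟪lam, η⟫ := by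
  have hshift : ∀ β ∈ S, 1 ≤ ⟪β, lam + η⟫ := fun β hβ => by
    rw [inner_add_right]
    linarith [hlam β hβ, hη β hβ]
  simpa using real_inner_sub_nonneg_of_forall_norm_le
    (convex_setOf_forall_le_inner (S : Set E) 1) hlam hmin hshift
end

section
/- Let q be a prime power and m ≥ 1 an integer. Let F = 𝔽_q((ϖ)) with ring of integers o_F = 𝔽_q[[ϖ]] and maximal ideal 𝔭_F = (ϖ), and let F' be a finite extension of ℚ_p (p the characteristic of 𝔽_q) with residue field 𝔽_q and ramification index ≥ m, with ring of integers o_{F'} and maximal ideal 𝔭_{F'}. Then the truncated rings o_F/𝔭_F^m and o_{F'}/𝔭_{F'}^m are isomorphic as rings. -/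
/-!
Put `A = o_{F'}/𝔭_{F'}^m`. Since `p ∈ 𝔭_{F'}^m`, `A` has characteristic `p`, and its residue
map onto `𝔽_q` has nilpotent kernel. As `𝔽_q` is formally étale over `𝔽_p`, the residue map
has a ring-hom section `s` (the Teichmüller map). The image `t` of a uniformizer generates the
kernel and has nilpotency index exactly `m`, so `∑ aᵢ Xⁱ ↦ ∑ s(aᵢ) tⁱ` is a surjection
`𝔽_q[X] → A` with kernel `(X^m)`; and `𝔽_q[X]/(X^m) ≅ 𝔽_q[[X]]/(X^m)`.
-/

open Polynomial

theorem exists_leftInverse_ringHom_of_isNilpotent_ker {p : ℕ} [Fact p.Prime]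
    {K A : Type*} [Field K] [Finite K] [CharP K p] [CommRing A] [CharP A p]
    (g : A →+* K) (hg : Function.Surjective g) (hnil : IsNilpotent (RingHom.ker g)) :
    ∃ s : K →+* A, Function.LeftInverse g s := by
  let _ := ZMod.algebra K p
  let _ := ZMod.algebra A p
  have : Algebra.FormallySmooth (ZMod p) K := by
    have : Algebra.IsSeparable (ZMod p) K := Algebra.IsAlgebraic.isSeparable_of_perfectField
    have := Algebra.FormallyEtale.of_isSeparable (ZMod p) K
    infer_instance
  let gₐ : A →ₐ[ZMod p] K :=
    { g with commutes' := RingHom.congr_fun (RingHom.ext_zmod (g.comp (algebraMap _ A)) _) }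
  exact ⟨Algebra.FormallySmooth.liftOfSurjective (AlgHom.id _ K) gₐ hg hnil,
    Algebra.FormallySmooth.liftOfSurjective_apply (AlgHom.id _ K) gₐ hg hnil⟩

section CoefficientField

variable {K A : Type*} [Field K] [CommRing A] {g : A →+* K} {s : K →+* A}
  (hs : Function.LeftInverse g s) {t : A} (ht : RingHom.ker g = Ideal.span {t})
include hs ht

theorem sub_map_mem_span_singleton (a : A) : a - s (g a) ∈ Ideal.span {t} := by
  rw [← ht, RingHom.mem_ker, map_sub, hs, sub_self]

theorem map_eval₂_eq_coeff_zero (f : K[X]) : g (f.eval₂ s t) = f.coeff 0 := by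
  have hgt : g t = 0 := by rw [← RingHom.mem_ker, ht]; exact Ideal.mem_span_singleton_self t
  rw [hom_eval₂, hgt, eval₂_at_zero, RingHom.comp_apply, hs]

theorem isUnit_of_map_ne_zero (hnil : IsNilpotent t) {a : A} (ha : g a ≠ 0) : IsUnit a := by
  obtain ⟨c, hc⟩ := Ideal.mem_span_singleton'.mp (sub_map_mem_span_singleton hs ht a)
  have hunit : IsUnit (s (g a)) := (Ne.isUnit ha).map s
  have hc_nil : IsNilpotent (c * t) := (Commute.all c t).isNilpotent_mul_left hnil
  simpa [hc] using hc_nil.isUnit_add_left_of_commute hunit (Commute.all _ _)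

theorem surjective_eval₂RingHom (hnil : IsNilpotent t) :
    Function.Surjective (eval₂RingHom s t) := by
  obtain ⟨m, htm⟩ := hnil
  suffices ∀ k a, ∃ f : K[X], ∃ b : A, a = f.eval₂ s t + t ^ k * b by
    intro a
    obtain ⟨f, b, rfl⟩ := this m a
    exact ⟨f, by simp [htm]⟩
  intro k
  induction k with
  | zero => exact fun a => ⟨0, a, by simp⟩
  | succ k ih =>
    intro a
    obtain ⟨f, b, rfl⟩ := ih a
    obtain ⟨c, hc⟩ := Ideal.mem_span_singleton'.mp (sub_map_mem_span_singleton hs ht b)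
    refine ⟨f + C (g b) * X ^ k, c, ?_⟩
    rw [eval₂_add, eval₂_mul, eval₂_C, eval₂_X_pow]
    linear_combination (-t ^ k) * hc

variable {m : ℕ} (htm : t ^ m = 0) (hlt : ∀ i < m, t ^ i ≠ 0)
include htm hlt

theorem ker_eval₂RingHom : RingHom.ker (eval₂RingHom s t) = Ideal.span {X ^ m} := by
  ext f
  rw [RingHom.mem_ker, coe_eval₂RingHom, Ideal.mem_span_singleton]
  refine ⟨fun hf => ?_, fun ⟨h, hfh⟩ => by simp [hfh, htm]⟩
  suffices ∀ k ≤ m, X ^ k ∣ f from this m le_rfl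
  intro k
  induction k with
  | zero => exact fun _ => one_dvd f
  | succ k ih =>
    intro hk
    obtain ⟨h, rfl⟩ := ih (by omega)
    have hth : t ^ k * h.eval₂ s t = 0 := by rwa [eval₂_mul, eval₂_X_pow] at hf
    have hh : h.coeff 0 = 0 := by
      rw [← map_eval₂_eq_coeff_zero hs ht]
      by_contra hne
      exact hlt k hk ((isUnit_of_map_ne_zero hs ht ⟨m, htm⟩ hne).mul_left_eq_zero.mp hth)
    rw [pow_succ]
    exact mul_dvd_mul_left _ (X_dvd_iff.mpr hh)

theorem nonempty_quotient_span_X_pow_ringEquiv :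
    Nonempty (K[X] ⧸ Ideal.span {(X ^ m : K[X])} ≃+* A) :=
  ⟨(Ideal.quotEquivOfEq (ker_eval₂RingHom hs ht htm hlt).symm).trans
    (RingHom.quotientKerEquivOfSurjective (surjective_eval₂RingHom hs ht ⟨m, htm⟩))⟩

end CoefficientField

section Truncation

variable (R : Type*) [CommRing R] (n : ℕ)

theorem Polynomial.ker_mk_comp_coeToPowerSeries :
    RingHom.ker ((Ideal.Quotient.mk (Ideal.span {PowerSeries.X ^ n})).comp
      (coeToPowerSeries.ringHom : R[X] →+* PowerSeries R)) =
      Ideal.span {(X ^ n : R[X])} := by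
  ext f
  simp [Ideal.Quotient.eq_zero_iff_mem, Ideal.mem_span_singleton, X_pow_dvd_iff,
    PowerSeries.X_pow_dvd_iff]

theorem Polynomial.surjective_mk_comp_coeToPowerSeries :
    Function.Surjective ((Ideal.Quotient.mk (Ideal.span {PowerSeries.X ^ n})).comp
      (coeToPowerSeries.ringHom : R[X] →+* PowerSeries R)) := by
  intro φ
  obtain ⟨φ, rfl⟩ := Ideal.Quotient.mk_surjective φ
  refine ⟨PowerSeries.trunc n φ, Ideal.Quotient.eq.mpr (Ideal.mem_span_singleton.mpr ?_)⟩
  refine PowerSeries.X_pow_dvd_iff.mpr fun i hi => ?_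
  simp [PowerSeries.coeff_trunc, hi]

noncomputable def Polynomial.quotientSpanXPowEquivPowerSeries :
    R[X] ⧸ Ideal.span {(X ^ n : R[X])} ≃+*
      PowerSeries R ⧸ Ideal.span {(PowerSeries.X ^ n : PowerSeries R)} :=
  (Ideal.quotEquivOfEq (ker_mk_comp_coeToPowerSeries R n).symm).trans
    (RingHom.quotientKerEquivOfSurjective (surjective_mk_comp_coeToPowerSeries R n))

end Truncation

section DiscreteValuationRing

variable {O : Type*} [CommRing O] [IsDomain O] [IsDiscreteValuationRing O] {ϖ : O}
  (hϖ : Irreducible ϖ)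
include hϖ

theorem Irreducible.mk_pow_eq_zero_iff (m i : ℕ) :
    Ideal.Quotient.mk (IsLocalRing.maximalIdeal O ^ m) ϖ ^ i = 0 ↔ m ≤ i := by
  rw [← map_pow, Ideal.Quotient.eq_zero_iff_mem, hϖ.maximalIdeal_eq, Ideal.span_singleton_pow,
    Ideal.mem_span_singleton, pow_dvd_pow_iff hϖ.ne_zero hϖ.not_isUnit]

theorem Irreducible.ker_factor_maximalIdeal_pow {m : ℕ} (hm : m ≠ 0) :
    RingHom.ker (Ideal.Quotient.factor (Ideal.pow_le_self hm) :
      O ⧸ IsLocalRing.maximalIdeal O ^ m →+* O ⧸ IsLocalRing.maximalIdeal O) =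
      Ideal.span {Ideal.Quotient.mk _ ϖ} := by
  rw [Ideal.Quotient.factor_ker, ← Set.image_singleton, ← Ideal.map_span, ← hϖ.maximalIdeal_eq]

end DiscreteValuationRing

theorem truncated_rings_isomorphic_close_fields_general
    (p m : ℕ) (hp : p.Prime) (hm : 1 ≤ m)
    (K : Type*) [Field K] [Fintype K] [CharP K p]
    (O : Type*) [CommRing O] [IsDomain O] [IsDiscreteValuationRing O]
    (hres : Nonempty (IsLocalRing.ResidueField O ≃+* K))
    (hram : (p : O) ∈ IsLocalRing.maximalIdeal O ^ m) :
    Nonempty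
      ((PowerSeries K ⧸ (Ideal.span {(PowerSeries.X : PowerSeries K)}) ^ m) ≃+*
        (O ⧸ IsLocalRing.maximalIdeal O ^ m)) := by
  have := Fact.mk hp
  obtain ⟨e⟩ := hres
  obtain ⟨ϖ, hϖ⟩ := IsDiscreteValuationRing.exists_irreducible O
  have hm₀ : m ≠ 0 := Nat.one_le_iff_ne_zero.mp hm
  let t := Ideal.Quotient.mk (IsLocalRing.maximalIdeal O ^ m) ϖ
  let res : O ⧸ IsLocalRing.maximalIdeal O ^ m →+* IsLocalRing.ResidueField O :=
    Ideal.Quotient.factor (Ideal.pow_le_self hm₀)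
  have hker : RingHom.ker (e.toRingHom.comp res) = Ideal.span {t} := by
    rw [RingHom.ker_equiv_comp]
    exact hϖ.ker_factor_maximalIdeal_pow hm₀
  have htm : t ^ m = 0 := (hϖ.mk_pow_eq_zero_iff m m).mpr le_rfl
  have hlt : ∀ i < m, t ^ i ≠ 0 := fun i hi => by rw [Ne, hϖ.mk_pow_eq_zero_iff]; omega
  have := (e.toRingHom.comp res).domain_nontrivial
  have : CharP (O ⧸ IsLocalRing.maximalIdeal O ^ m) p := (CharP.charP_iff_prime_eq_zero hp).mpr
    (by simpa using Ideal.Quotient.eq_zero_iff_mem.mpr hram)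
  obtain ⟨s, hs⟩ := exists_leftInverse_ringHom_of_isNilpotent_ker (e.toRingHom.comp res)
    (e.surjective.comp (Ideal.Quotient.factor_surjective _))
    ⟨m, by rw [hker, Ideal.span_singleton_pow, htm, Ideal.span_singleton_zero]; rfl⟩
  obtain ⟨φ⟩ := nonempty_quotient_span_X_pow_ringEquiv hs hker htm hlt
  rw [Ideal.span_singleton_pow]
  exact ⟨(quotientSpanXPowEquivPowerSeries K m).symm.trans φ⟩

/-- Close fields: let `K = 𝔽_q` be a finite field of characteristic `p` and `m ≥ 1`.
The truncated ring `o_F/𝔭_F^m` for `F = 𝔽_q((ϖ))` (i.e. `K[[X]]/(X)^m`) is isomorphic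
to `o_{F'}/𝔭_{F'}^m` for any finite extension `F'/ℚ_p` whose ring of integers `O` (a
characteristic-zero DVR) has residue field `𝔽_q` and ramification index `≥ m`
(i.e. `p ∈ 𝔭_{F'}^m`). -/
theorem truncated_rings_isomorphic_close_fields
    (p m : ℕ) (hp : p.Prime) (hm : 1 ≤ m)
    (K : Type*) [Field K] [Fintype K] [CharP K p]
    (O : Type*) [CommRing O] [IsDomain O] [IsDiscreteValuationRing O] [CharZero O]
    (hres : Nonempty (IsLocalRing.ResidueField O ≃+* K))
    (hram : (p : O) ∈ IsLocalRing.maximalIdeal O ^ m) :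
    Nonempty
      ((PowerSeries K ⧸ (Ideal.span {(PowerSeries.X : PowerSeries K)}) ^ m) ≃+*
        (O ⧸ IsLocalRing.maximalIdeal O ^ m)) :=
  truncated_rings_isomorphic_close_fields_general p m hp hm K O hres hram
end
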